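/- Let m, λ, A₀ be real constants with m ≠ 0 and set A(t) = e^{A₀t}. On ℝ⁴ with coordinates (t,x,y,z), define the Bianchi III metric g = diag(−A(t)²e^{mλt}, A(t)²e^{mλt}, A(t)²e^{m(λ−1)t}, A(t)²e^{−2x}). Then the vector field X₃ = (2/m, 0, y, λz) is a homothetic Killing vector of g with constant conformal factor ψ = 2A₀/m + λ. -/

import Mathlib

/-!
Every component of the Bianchi III metric is `±exp` of a linear form, `g_μμ = s_μ exp (c_μ ⬝ p)`,
and `X₃ = b + d * p` is affine with diagonal linear part. For such a pair the Lie derivative of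
`g` along `ξ` is diagonal with entries `(c_μ ⬝ ξ(p) + 2 d_μ) g_μμ`, so `ξ` is conformal Killing with
factor `ψ` as soon as `c_μ ⬝ ξ(p) + 2 d_μ = 2ψ` for every `μ`. For `X₃` all four of these numbers
equal `4A₀/m + 2λ`.
-/

noncomputable section

/-- Partial derivative of `f` in the `μ`-th coordinate direction at `p`. -/
def pd (μ : Fin 4) (f : (Fin 4 → ℝ) → ℝ) (p : Fin 4 → ℝ) : ℝ :=
  fderiv ℝ f p (Pi.single μ 1)

/-- `ξ` is a conformal Killing vector of the metric `g` with conformal factor `ψ`. -/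
def IsCKV (g : (Fin 4 → ℝ) → Matrix (Fin 4) (Fin 4) ℝ)
    (ξ : (Fin 4 → ℝ) → Fin 4 → ℝ) (ψ : (Fin 4 → ℝ) → ℝ) : Prop :=
  ∀ (μ ν : Fin 4) (p : Fin 4 → ℝ),
    (∑ l : Fin 4, (ξ p l * pd l (fun q => g q μ ν) p
      + g p l ν * pd μ (fun q => ξ q l) p
      + g p μ l * pd ν (fun q => ξ q l) p)) = 2 * ψ p * g p μ ν

/-- `ξ` is a Killing vector of the metric `g`. -/
def IsKV (g : (Fin 4 → ℝ) → Matrix (Fin 4) (Fin 4) ℝ)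
    (ξ : (Fin 4 → ℝ) → Fin 4 → ℝ) : Prop :=
  ∀ (μ ν : Fin 4) (p : Fin 4 → ℝ),
    (∑ l : Fin 4, (ξ p l * pd l (fun q => g q μ ν) p
      + g p l ν * pd μ (fun q => ξ q l) p
      + g p μ l * pd ν (fun q => ξ q l) p)) = 0

open Matrix

theorem hasFDerivAt_dotProduct {ι : Type*} [Fintype ι] (c p : ι → ℝ) :
    HasFDerivAt (fun q => c ⬝ᵥ q)
      (∑ i, c i • ContinuousLinearMap.proj (R := ℝ) (φ := fun _ : ι => ℝ) i) p := by
  simpa only [dotProduct, FunLike.coe_sum, FunLike.coe_smul]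
    using HasFDerivAt.fun_sum (u := Finset.univ) fun i _ =>
      (hasFDerivAt_apply (𝕜 := ℝ) i p).const_mul (c i)

theorem HasFDerivAt.pd_eq {μ : Fin 4} {f : (Fin 4 → ℝ) → ℝ} {f' : (Fin 4 → ℝ) →L[ℝ] ℝ}
    {p : Fin 4 → ℝ} (h : HasFDerivAt f f' p) : pd μ f p = f' (Pi.single μ 1) := by
  rw [pd, h.fderiv]

lemma pd_const (μ : Fin 4) (a : ℝ) (p : Fin 4 → ℝ) : pd μ (fun _ => a) p = 0 := by
  simp [pd]

lemma pd_const_add_mul_apply (μ l : Fin 4) (b d p : Fin 4 → ℝ) :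
    pd μ (fun q => b l + d l * q l) p = if l = μ then d μ else 0 := by
  rw [(((hasFDerivAt_apply l p).const_mul (d l)).const_add (b l)).pd_eq]
  by_cases h : l = μ <;> simp [h]

lemma pd_const_mul_exp_dotProduct (μ : Fin 4) (s : ℝ) (c p : Fin 4 → ℝ) :
    pd μ (fun q => s * Real.exp (c ⬝ᵥ q)) p = s * Real.exp (c ⬝ᵥ p) * c μ := by
  rw [((hasFDerivAt_dotProduct c p).exp.const_mul s).pd_eq]
  simp [Pi.single_apply]
  ring

theorem isCKV_diagonal_exp (s : Fin 4 → ℝ) (c : Fin 4 → Fin 4 → ℝ) (b d : Fin 4 → ℝ) (ψ : ℝ)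
    (h : ∀ μ p, c μ ⬝ᵥ (b + d * p) + 2 * d μ = 2 * ψ) :
    IsCKV (fun p => diagonal fun μ => s μ * Real.exp (c μ ⬝ᵥ p)) (fun p l => b l + d l * p l)
      (fun _ => ψ) := by
  intro μ ν p
  by_cases hμν : μ = ν
  · subst hμν
    simp only [diagonal_apply_eq, diagonal_apply, pd_const_mul_exp_dotProduct,
      pd_const_add_mul_apply, mul_ite, mul_zero, Finset.sum_add_distrib, Finset.sum_ite_eq',
      Finset.mem_univ, if_true]
    set gμμ := s μ * Real.exp (c μ ⬝ᵥ p)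
    have along_ξ : ∑ l, (b l + d l * p l) * (gμμ * c μ l) = c μ ⬝ᵥ (b + d * p) * gμμ := by
      rw [dotProduct, Finset.sum_mul]
      exact Finset.sum_congr rfl fun l _ => by simp only [Pi.add_apply, Pi.mul_apply]; ring
    rw [along_ξ, ← h μ p]
    ring
  · simp only [diagonal_apply_ne _ hμν, diagonal_apply, pd_const_add_mul_apply, pd_const,
      mul_ite, mul_zero, zero_add, Finset.sum_add_distrib, Finset.sum_ite_eq', Finset.mem_univ,
      if_true, hμν, if_false, zero_mul, add_zero]

lemma exp_sq_mul_exp (a b : ℝ) : Real.exp a ^ 2 * Real.exp b = Real.exp (2 * a + b) := by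
  rw [sq, ← Real.exp_add, ← Real.exp_add, two_mul]

/-- with `A(t) = e^{A₀t}`, the vector field `X₃ = (2/m)∂_t + y∂_y + λz∂_z`
is a homothetic Killing vector of the Bianchi III metric with constant conformal factor
`ψ = 2A₀/m + λ`. -/
theorem bianchiIII_X3_is_HV (m lam A₀ : ℝ) (hm : m ≠ 0)
    (A : ℝ → ℝ) (hA : A = fun t => Real.exp (A₀ * t))
    (g : (Fin 4 → ℝ) → Matrix (Fin 4) (Fin 4) ℝ)
    (hg : g = fun p => Matrix.diagonal
      ![-((A (p 0)) ^ 2 * Real.exp (m * lam * p 0)),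
        (A (p 0)) ^ 2 * Real.exp (m * lam * p 0),
        (A (p 0)) ^ 2 * Real.exp (m * (lam - 1) * p 0),
        (A (p 0)) ^ 2 * Real.exp (-2 * p 1)])
    (ξ : (Fin 4 → ℝ) → Fin 4 → ℝ)
    (hξ : ξ = fun p => ![2 / m, 0, p 2, lam * p 3]) :
    IsCKV g ξ (fun _ => 2 * A₀ / m + lam) := by
  subst hA hg hξ
  convert isCKV_diagonal_exp ![-1, 1, 1, 1]
    ![![2 * A₀ + m * lam, 0, 0, 0], ![2 * A₀ + m * lam, 0, 0, 0],
      ![2 * A₀ + m * (lam - 1), 0, 0, 0], ![2 * A₀, -2, 0, 0]]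
    ![2 / m, 0, 0, 0] ![0, 0, 1, lam] (2 * A₀ / m + lam) ?_ using 1
  · funext p
    congr 1
    funext μ
    fin_cases μ <;> simp [exp_sq_mul_exp, dotProduct, Fin.sum_univ_four] <;> ring_nf
  · funext p l
    fin_cases l <;> simp
  · intro μ p
    fin_cases μ <;> simp [dotProduct, Fin.sum_univ_four] <;> field_simp
    ring
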